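/- arXiv:2312.06938 — 3 statements merged into one kernel-verified Lean document; each statement's English description precedes it below -/
import Mathlib

section
/- Let f₀ : ℝ³ → ℝ be defined by f₀(x,y,z) := z⁵ + y⁷x + x¹⁵ and let A := f₀⁻¹(0). Then A is the graph of the continuous function g : ℝ² → ℝ, g(x,y) := −(y⁷x + x¹⁵)^{1/5} (real fifth root), i.e. A = {(x,y,g(x,y)) : (x,y) ∈ ℝ²}; the function g satisfies the flat condition at 0 ∈ ℝ²; and consequently LD_0(A) = ℝ² × {0} ⊆ ℝ³. -/
open Filter Topology Set Asymptotics

variable {E : Type*} [NormedAddCommGroup E] [NormedSpace ℝ E]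

/-- The direction set `D_p(A)`. -/
def dirSet (A : Set E) (p : E) : Set E :=
  {a | ‖a‖ = 1 ∧ ∃ x : ℕ → E, (∀ i, x i ∈ A ∧ x i ≠ p) ∧
    Tendsto x atTop (𝓝 p) ∧
    Tendsto (fun i => ‖x i - p‖⁻¹ • (x i - p)) atTop (𝓝 a)}

/-- The real tangent cone `LD_p(A)`. -/
def LDir (A : Set E) (p : E) : Set E :=
  {w | ∃ a ∈ dirSet A p, ∃ t : ℝ, 0 ≤ t ∧ w = t • a}

/-- Condition (SSP) at `p`. -/
def SSP (A : Set E) (p : E) : Prop :=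
  ∀ a : ℕ → E, (∀ m, a m ≠ p) → Tendsto a atTop (𝓝 p) →
    (∃ d ∈ dirSet A p, Tendsto (fun m => ‖a m - p‖⁻¹ • (a m - p)) atTop (𝓝 d)) →
    ∃ b : ℕ → E, (∀ m, b m ∈ A) ∧
      Tendsto (fun m => ‖a m - b m‖ / ‖a m - p‖) atTop (𝓝 0) ∧
      Tendsto (fun m => ‖a m - b m‖ / ‖b m - p‖) atTop (𝓝 0)

/-- The geometric directional bundle fiber `𝒢D_p(A)`. -/
def GDir (A : Set E) (p : E) : Set E :=
  {a | ‖a‖ = 1 ∧ ∃ q : ℕ → E, (∀ m, q m ∈ A) ∧ Tendsto q atTop (𝓝 p) ∧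
    ∃ u : ℕ → E, (∀ m, u m ∈ dirSet A (q m)) ∧ Tendsto u atTop (𝓝 a)}

/-- The cone `L𝒢D_p(A)` over the geometric directional bundle fiber. -/
def LGDir (A : Set E) (p : E) : Set E :=
  {w | ∃ a ∈ GDir A p, ∃ t : ℝ, 0 ≤ t ∧ w = t • a}

/-- A bi-Lipschitz homeomorphism of `E`: a bijection which is Lipschitz with
Lipschitz inverse (equivalently, antilipschitz). -/
def IsBiLipschitz (h : E → E) : Prop :=
  Function.Bijective h ∧ ∃ K K' : NNReal, LipschitzWith K h ∧ AntilipschitzWith K' h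

/-- The real fifth root of a real number. -/
noncomputable def fifthRoot (t : ℝ) : ℝ :=
  if 0 ≤ t then t ^ ((1 : ℝ) / 5) else -((-t) ^ ((1 : ℝ) / 5))

/-- `g(x,y) = -(y⁷x + x¹⁵)^{1/5}`. -/
noncomputable def gBS (x y : ℝ) : ℝ := -fifthRoot (y ^ 7 * x + x ^ 15)

/-!
Since `z ↦ z⁵` is an odd bijection of `ℝ`, `A` is the graph of `g`, and `|y⁷x + x¹⁵| ≤ 2r⁸`
for `r = ‖(x, y)‖ ≤ 1` gives `|g| ≤ 2 r^{8/5}`. Hence the vertical coordinate is `o(‖v‖)` on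
`A`, which kills the vertical component of every direction of `A` at `0`; conversely a
horizontal unit vector `a` is the direction at `0` of the curve `t ↦ t • a + g(t a) e₃` in `A`,
because `g(t a) = o(t)`.
-/

theorem fifthRoot_pow_five (t : ℝ) : fifthRoot t ^ 5 = t := by
  unfold fifthRoot
  split_ifs with h
  · rw [← Real.rpow_natCast, ← Real.rpow_mul h]; norm_num
  · rw [Odd.neg_pow (by decide), ← Real.rpow_natCast, ← Real.rpow_mul (by linarith)]; norm_num

theorem pow_five_add_eq_zero_iff {z w : ℝ} : z ^ 5 + w = 0 ↔ z = -fifthRoot w := by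
  calc z ^ 5 + w = 0 ↔ z ^ 5 = (-fifthRoot w) ^ 5 := by
        rw [Odd.neg_pow (by decide), fifthRoot_pow_five, add_eq_zero_iff_eq_neg]
  _ ↔ z = -fifthRoot w := Odd.pow_inj (by decide)

theorem abs_fifthRoot (t : ℝ) : |fifthRoot t| = |t| ^ (1 / 5 : ℝ) := by
  unfold fifthRoot
  split_ifs with h
  · rw [abs_of_nonneg h, abs_of_nonneg (Real.rpow_nonneg h _)]
  · rw [abs_of_neg (not_le.1 h), abs_neg, abs_of_nonneg (Real.rpow_nonneg (by linarith) _)]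

theorem continuous_fifthRoot : Continuous fifthRoot := by
  have hroot : Continuous fun t : ℝ => t ^ (1 / 5 : ℝ) :=
    continuous_iff_continuousAt.2 fun t => Real.continuousAt_rpow_const t _ (Or.inr (by norm_num))
  exact Continuous.if_le hroot (hroot.comp continuous_neg).neg continuous_const continuous_id
    fun t ht => by simp [← ht]

theorem continuous_gBS : Continuous fun p : ℝ × ℝ => gBS p.1 p.2 :=
  (continuous_fifthRoot.comp (by fun_prop)).neg

theorem abs_gBS_le {x y : ℝ} (h : √(x ^ 2 + y ^ 2) ≤ 1) :
    |gBS x y| ≤ 2 * √(x ^ 2 + y ^ 2) ^ (8 / 5 : ℝ) := by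
  set r := √(x ^ 2 + y ^ 2)
  have hr : 0 ≤ r := Real.sqrt_nonneg _
  have hx : |x| ≤ r := Real.abs_le_sqrt (by nlinarith [sq_nonneg y])
  have hy : |y| ≤ r := Real.abs_le_sqrt (by nlinarith [sq_nonneg x])
  have hw : |y ^ 7 * x + x ^ 15| ≤ 2 * r ^ 8 :=
    calc |y ^ 7 * x + x ^ 15| ≤ |y| ^ 7 * |x| + |x| ^ 15 :=
          (abs_add_le _ _).trans_eq (by rw [abs_mul, abs_pow, abs_pow])
    _ ≤ r ^ 7 * r + r ^ 15 := by gcongr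
    _ ≤ r ^ 8 + r ^ 8 := by
        rw [← pow_succ]
        gcongr r ^ 8 + ?_
        exact pow_le_pow_of_le_one hr h (by norm_num)
    _ = 2 * r ^ 8 := by ring
  have h2 : (2 : ℝ) ^ (1 / 5 : ℝ) ≤ 2 :=
    Real.rpow_le_self_of_one_le (by norm_num) (by norm_num)
  calc |gBS x y| = |y ^ 7 * x + x ^ 15| ^ (1 / 5 : ℝ) := by rw [gBS, abs_neg, abs_fifthRoot]
  _ ≤ (2 * r ^ 8) ^ (1 / 5 : ℝ) := by gcongr
  _ = 2 ^ (1 / 5 : ℝ) * r ^ (8 / 5 : ℝ) := by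
      rw [Real.mul_rpow (by norm_num) (by positivity), ← Real.rpow_natCast, ← Real.rpow_mul hr]
      norm_num
  _ ≤ 2 * r ^ (8 / 5 : ℝ) := by gcongr

theorem Asymptotics.isLittleO_of_norm_le_rpow {α F G : Type*} [NormedAddCommGroup F]
    [NormedAddCommGroup G] {l : Filter α} {f : α → F} {g : α → G} {C e : ℝ} (he : 0 < e)
    (hg : Tendsto g l (𝓝 0)) (h : ∀ᶠ x in l, ‖f x‖ ≤ C * ‖g x‖ ^ (1 + e)) :
    f =o[l] g := by
  have hbig : f =O[l] fun x => ‖g x‖ ^ e * ‖g x‖ :=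
    IsBigO.of_bound C <| h.mono fun x hx => by
      rwa [Real.norm_of_nonneg (by positivity), mul_comm _ ‖g x‖,
        ← Real.rpow_one_add' (norm_nonneg _) (by linarith)]
  have hsmall : (fun x => ‖g x‖ ^ e) =o[l] fun _ => (1 : ℝ) := by
    rw [isLittleO_one_iff]
    simpa [Real.zero_rpow he.ne', Function.comp_def] using
      ((Real.continuousAt_rpow_const 0 e (Or.inr he.le)).tendsto.comp (by simpa using hg.norm))
  have hnorm : (fun x => 1 * ‖g x‖) =O[l] g := by simpa using (isBigO_refl g l).norm_left
  exact hbig.trans_isLittleO ((hsmall.mul_isBigO (isBigO_refl _ l)).trans_isBigO hnorm)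

theorem apply_eq_zero_of_mem_dirSet {F : Type*} [NormedAddCommGroup F] [NormedSpace ℝ F]
    {A : Set E} {p a : E} (φ : E →L[ℝ] F)
    (hφ : (fun x => φ (x - p)) =o[𝓝[A] p] fun x => x - p) (ha : a ∈ dirSet A p) :
    φ a = 0 := by
  obtain ⟨-, x, hxA, hxp, hxa⟩ := ha
  have hx : Tendsto x atTop (𝓝[A] p) :=
    tendsto_nhdsWithin_iff.2 ⟨hxp, Eventually.of_forall fun i => (hxA i).1⟩
  have h0 : Tendsto (fun i => φ (‖x i - p‖⁻¹ • (x i - p))) atTop (𝓝 0) := by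
    simpa only [map_smul, Function.comp_def] using
      (hφ.comp_tendsto hx).norm_right.tendsto_inv_smul_nhds_zero
  exact tendsto_nhds_unique ((φ.continuous.tendsto a).comp hxa) h0

theorem mem_dirSet_of_isLittleO {A : Set E} {p a : E} (γ : ℝ → E) (ha : ‖a‖ = 1)
    (hγA : ∀ t > 0, γ t ∈ A) (hγp : ∀ t > 0, γ t ≠ p)
    (hγ : (fun t => γ t - p - t • a) =o[𝓝[>] 0] fun t => t) : a ∈ dirSet A p := by
  have hpos : ∀ᶠ t in 𝓝[>] (0 : ℝ), 0 < t := self_mem_nhdsWithin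
  have hu : Tendsto (fun t => t⁻¹ • (γ t - p)) (𝓝[>] 0) (𝓝 a) := by
    rw [← tendsto_sub_nhds_zero_iff]
    refine hγ.tendsto_inv_smul_nhds_zero.congr' (hpos.mono fun t ht => ?_)
    dsimp only
    rw [smul_sub, inv_smul_smul₀ ht.ne']
  have hγlim : Tendsto γ (𝓝[>] 0) (𝓝 p) := by
    have := (tendsto_nhdsWithin_of_tendsto_nhds tendsto_id).smul hu
    rw [zero_smul] at this
    refine tendsto_sub_nhds_zero_iff.1 (this.congr' (hpos.mono fun t ht => ?_))
    simp [smul_inv_smul₀ ht.ne']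
  have hdir : Tendsto (fun t => ‖γ t - p‖⁻¹ • (γ t - p)) (𝓝[>] 0) (𝓝 a) := by
    have := (hu.norm.inv₀ (by simp [ha])).smul hu
    rw [ha, inv_one, one_smul] at this
    refine this.congr' (hpos.mono fun t ht => ?_)
    rw [norm_smul, norm_inv, Real.norm_of_nonneg ht.le, mul_inv, inv_inv, smul_smul,
      mul_right_comm, mul_inv_cancel₀ ht.ne', one_mul]
  have hs : Tendsto (fun i : ℕ => 1 / ((i : ℝ) + 1)) atTop (𝓝[>] 0) :=
    tendsto_nhdsWithin_iff.2 ⟨tendsto_one_div_add_atTop_nhds_zero_nat,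
      Eventually.of_forall fun _ => Set.mem_Ioi.2 Nat.one_div_pos_of_nat⟩
  exact ⟨ha, fun i => γ (1 / (i + 1)),
    fun _ => ⟨hγA _ Nat.one_div_pos_of_nat, hγp _ Nat.one_div_pos_of_nat⟩,
    hγlim.comp hs, hdir.comp hs⟩

theorem LDir_eq_of_dirSet {A : Set E} {p : E} (V : Submodule ℝ E) (hV : V ≠ ⊥)
    (hsub : dirSet A p ⊆ V) (hsup : ∀ a ∈ V, ‖a‖ = 1 → a ∈ dirSet A p) :
    LDir A p = V := by
  ext w
  refine ⟨fun ⟨a, ha, t, _, hw⟩ => hw ▸ V.smul_mem t (hsub ha), fun hw => ?_⟩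
  obtain ⟨u, huV, hu0⟩ := Submodule.exists_mem_ne_zero_of_ne_bot hV
  by_cases hw0 : w = 0
  · exact ⟨‖u‖⁻¹ • u, hsup _ (V.smul_mem _ huV) (norm_smul_inv_norm hu0), 0, le_rfl,
      by rw [hw0, zero_smul]⟩
  · exact ⟨‖w‖⁻¹ • w, hsup _ (V.smul_mem _ hw) (norm_smul_inv_norm hw0), ‖w‖, norm_nonneg w,
      (smul_inv_smul₀ (norm_ne_zero_iff.2 hw0) w).symm⟩

local notation "ℝ³" => EuclideanSpace ℝ (Fin 3)

def bsSurface : Set ℝ³ := (fun v : ℝ³ => v 2 ^ 5 + v 1 ^ 7 * v 0 + v 0 ^ 15) ⁻¹' {0}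

theorem mem_bsSurface_iff {v : ℝ³} : v ∈ bsSurface ↔ v 2 = gBS (v 0) (v 1) := by
  rw [bsSurface, mem_preimage, mem_singleton_iff, add_assoc, pow_five_add_eq_zero_iff, gBS]

theorem norm_eq_sqrt_coords (v : ℝ³) : ‖v‖ = √(v 0 ^ 2 + v 1 ^ 2 + v 2 ^ 2) := by
  simp [EuclideanSpace.norm_eq, Fin.sum_univ_three]

theorem sqrt_sq_add_sq_le_norm (v : ℝ³) : √(v 0 ^ 2 + v 1 ^ 2) ≤ ‖v‖ := by
  rw [norm_eq_sqrt_coords]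
  exact Real.sqrt_le_sqrt (le_add_of_nonneg_right (sq_nonneg _))

theorem isLittleO_coord_two_bsSurface :
    (fun v : ℝ³ => v 2) =o[𝓝[bsSurface] 0] fun v => v := by
  refine isLittleO_of_norm_le_rpow (C := 2) (by norm_num : (0 : ℝ) < 3 / 5)
    (tendsto_nhdsWithin_of_tendsto_nhds tendsto_id) ?_
  filter_upwards [self_mem_nhdsWithin, nhdsWithin_le_nhds (Metric.closedBall_mem_nhds 0 one_pos)]
    with v hv hv1
  rw [mem_closedBall_zero_iff] at hv1
  have hr := sqrt_sq_add_sq_le_norm v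
  calc ‖v 2‖ = |gBS (v 0) (v 1)| := by rw [mem_bsSurface_iff.1 hv, Real.norm_eq_abs]
  _ ≤ 2 * √(v 0 ^ 2 + v 1 ^ 2) ^ (8 / 5 : ℝ) := abs_gBS_le (hr.trans hv1)
  _ ≤ 2 * ‖v‖ ^ (1 + 3 / 5 : ℝ) := by
      rw [show (1 + 3 / 5 : ℝ) = 8 / 5 by norm_num]
      gcongr

theorem mem_dirSet_bsSurface {a : ℝ³} (ha : ‖a‖ = 1) (ha2 : a 2 = 0) :
    a ∈ dirSet bsSurface 0 := by
  have hplane : a 0 ^ 2 + a 1 ^ 2 = 1 := by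
    have := norm_eq_sqrt_coords a
    rw [ha, ha2, eq_comm, Real.sqrt_eq_one] at this
    simpa using this
  have hr : ∀ t : ℝ, √((t * a 0) ^ 2 + (t * a 1) ^ 2) = |t| := fun t => by
    rw [← Real.sqrt_sq_eq_abs]
    congr 1
    linear_combination t ^ 2 * hplane
  let γ : ℝ → ℝ³ := fun t => t • a + gBS (t * a 0) (t * a 1) • EuclideanSpace.single 2 1
  have hγ0 : ∀ t, γ t 0 = t * a 0 := by simp [γ]
  have hγ1 : ∀ t, γ t 1 = t * a 1 := by simp [γ]
  have hγ2 : ∀ t, γ t 2 = gBS (t * a 0) (t * a 1) := by simp [γ, ha2]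
  refine mem_dirSet_of_isLittleO γ ha
    (fun t _ => mem_bsSurface_iff.2 (by rw [hγ0, hγ1, hγ2])) (fun t ht h0 => ?_) ?_
  · have := sqrt_sq_add_sq_le_norm (γ t)
    rw [hγ0, hγ1, hr, h0, norm_zero, abs_of_pos ht] at this
    linarith
  · refine isLittleO_of_norm_le_rpow (C := 2) (by norm_num : (0 : ℝ) < 3 / 5)
      (tendsto_nhdsWithin_of_tendsto_nhds tendsto_id) ?_
    filter_upwards [nhdsWithin_le_nhds (Metric.closedBall_mem_nhds (0 : ℝ) one_pos)] with t ht
    rw [mem_closedBall_zero_iff, Real.norm_eq_abs] at ht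
    have := abs_gBS_le (x := t * a 0) (y := t * a 1) (by rwa [hr])
    simpa [γ, norm_smul, hr, show (1 + 3 / 5 : ℝ) = 8 / 5 by norm_num] using this

theorem stmt16 :
    -- `A = f₀⁻¹(0)` is the graph of `g`
    ((fun v : EuclideanSpace ℝ (Fin 3) => v 2 ^ 5 + v 1 ^ 7 * v 0 + v 0 ^ 15) ⁻¹' {0}
        = {v : EuclideanSpace ℝ (Fin 3) | v 2 = gBS (v 0) (v 1)}) ∧
    -- `g` is continuous
    Continuous (fun p : ℝ × ℝ => gBS p.1 p.2) ∧
    -- `g` satisfies the flat condition at `0 ∈ ℝ²`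
    (∃ e > (0 : ℝ), ∃ C > (0 : ℝ), ∃ δ > (0 : ℝ), ∀ x y : ℝ,
      Real.sqrt (x ^ 2 + y ^ 2) < δ →
        |gBS x y| ≤ C * Real.sqrt (x ^ 2 + y ^ 2) ^ ((1 : ℝ) + e)) ∧
    -- consequently `LD_0(A) = ℝ² × {0}`
    LDir ((fun v : EuclideanSpace ℝ (Fin 3) =>
        v 2 ^ 5 + v 1 ^ 7 * v 0 + v 0 ^ 15) ⁻¹' {0}) 0
      = {v : EuclideanSpace ℝ (Fin 3) | v 2 = 0} := by
  refine ⟨Set.ext fun v => mem_bsSurface_iff, continuous_gBS,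
    ⟨3 / 5, by norm_num, 2, two_pos, 1, one_pos, fun x y h => ?_⟩, ?_⟩
  · rw [show (1 + 3 / 5 : ℝ) = 8 / 5 by norm_num]
    exact abs_gBS_le h.le
  · have hV : LinearMap.ker ((EuclideanSpace.proj 2 : ℝ³ →L[ℝ] ℝ) : ℝ³ →ₗ[ℝ] ℝ) ≠ ⊥ :=
      (Submodule.ne_bot_iff _).2 ⟨EuclideanSpace.single 0 (1 : ℝ), by simp, by simp⟩
    refine (LDir_eq_of_dirSet (A := bsSurface) _ hV
      (fun a ha => LinearMap.mem_ker.2 <| apply_eq_zero_of_mem_dirSet (EuclideanSpace.proj 2)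
        (by simpa using isLittleO_coord_two_bsSurface) ha)
      (fun a ha h1 => mem_dirSet_bsSurface h1 ha)).trans ?_
    ext v
    simp
end

section
/- Let f₀ : ℝ³ → ℝ be defined by f₀(x,y,z) := z⁵ + y⁷x + x¹⁵ and let A := f₀⁻¹(0). Then ({0} × ℝ × ℝ) ∪ (ℝ × {0} × ℝ) ∪ (ℝ × ℝ × {0}) ⊆ L𝒢D_0(A); in particular ℝ × ℝ × {0} is a proper subset of L𝒢D_0(A), even though LD_0(A) = ℝ² × {0}. -/
/-!
The cone `LD_0(A)` is read off from the weighted homogeneity of `f₀`: writing a point of `A` as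
`r • w` with `‖w‖ = 1`, the equation becomes `w₂⁵ + r³ w₁⁷ w₀ + r¹⁰ w₀¹⁵ = 0`, so limiting
directions satisfy `w₂ = 0`, and conversely every direction of the plane `z = 0` is attained by
solving this equation for `w₂` (odd powers are onto). For the other two planes one uses smooth
points of `A` near `0`: along `(0, s, 0)` the tangent plane of `A` is `x = 0`, and along
`(s, -s², 0)` it is `2 s x + y = 0`, which tends to `y = 0` as `s → 0`. By the implicit function
theorem every unit vector of such a tangent plane lies in the direction set at that point.
-/

open Filter Topology Set Asymptotics

variable {E : Type*} [NormedAddCommGroup E] [NormedSpace ℝ E]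

lemma tendsto_inv_norm_smul {v : E} (hv : v ≠ 0) :
    Tendsto (fun w : E => ‖w‖⁻¹ • w) (𝓝 v) (𝓝 (‖v‖⁻¹ • v)) :=
  (tendsto_norm.inv₀ (norm_ne_zero_iff.2 hv)).smul tendsto_id

lemma exists_smul_eq_of_inv_norm_smul_mem {S : Set E} (hS : S.Nonempty) {v : E}
    (h : v ≠ 0 → ‖v‖⁻¹ • v ∈ S) : ∃ a ∈ S, ∃ t : ℝ, 0 ≤ t ∧ v = t • a := by
  rcases eq_or_ne v 0 with rfl | hv
  · obtain ⟨a, ha⟩ := hS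
    exact ⟨a, ha, 0, le_rfl, (zero_smul ℝ a).symm⟩
  · refine ⟨_, h hv, ‖v‖, norm_nonneg v, ?_⟩
    rw [smul_inv_smul₀ (norm_ne_zero_iff.2 hv)]

lemma mem_dirSet_of_tendsto {α : Type*} {l : Filter α} [l.NeBot] [l.IsCountablyGenerated]
    {A : Set E} {p a : E} {x : α → E} (hxA : ∀ᶠ i in l, x i ∈ A ∧ x i ≠ p)
    (hx : Tendsto x l (𝓝 p)) (ha : Tendsto (fun i => ‖x i - p‖⁻¹ • (x i - p)) l (𝓝 a)) :
    a ∈ dirSet A p := by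
  have hunit : ∀ᶠ i in l, ‖‖x i - p‖⁻¹ • (x i - p)‖ = 1 :=
    hxA.mono fun i hi => norm_smul_inv_norm (𝕜 := ℝ) (sub_ne_zero.2 hi.2)
  obtain ⟨s, hs, hsA⟩ := exists_seq_forall_of_frequently hxA.frequently
  exact ⟨tendsto_nhds_unique ha.norm (tendsto_const_nhds.congr' (hunit.mono fun _ h => h.symm)),
    x ∘ s, hsA, hx.comp hs, ha.comp hs⟩

lemma mem_GDir_of_tendsto {α : Type*} {l : Filter α} [l.NeBot] [l.IsCountablyGenerated]
    {A : Set E} {p a : E} {q u : α → E} (hqu : ∀ᶠ i in l, q i ∈ A ∧ u i ∈ dirSet A (q i))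
    (hq : Tendsto q l (𝓝 p)) (hu : Tendsto u l (𝓝 a)) : a ∈ GDir A p := by
  obtain ⟨s, hs, hsA⟩ := exists_seq_forall_of_frequently hqu.frequently
  exact ⟨tendsto_nhds_unique hu.norm
      (tendsto_const_nhds.congr' (hqu.mono fun _ h => h.2.1.symm)),
    q ∘ s, fun m => (hsA m).1, hq.comp hs, u ∘ s, fun m => (hsA m).2, hu.comp hs⟩

lemma dirSet_subset_GDir {A : Set E} {p : E} (hp : p ∈ A) : dirSet A p ⊆ GDir A p :=
  fun _ ha => mem_GDir_of_tendsto (l := (atTop : Filter ℕ)) (.of_forall fun _ => ⟨hp, ha⟩)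
    tendsto_const_nhds tendsto_const_nhds

lemma mem_dirSet_of_tendsto_inv_smul_sub {A : Set E} {q w : E} {γ : ℝ → E} (hw : w ≠ 0)
    (hγA : ∀ᶠ t in 𝓝[>] 0, γ t ∈ A) (hγ : Tendsto (fun t => t⁻¹ • (γ t - q)) (𝓝[>] 0) (𝓝 w)) :
    ‖w‖⁻¹ • w ∈ dirSet A q := by
  have hne : ∀ᶠ t in 𝓝[>] (0 : ℝ), t⁻¹ • (γ t - q) ≠ 0 := hγ.eventually_ne hw
  refine mem_dirSet_of_tendsto (x := γ) ?_ ?_ ((tendsto_inv_norm_smul hw).comp hγ |>.congr' ?_)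
  · filter_upwards [hγA, hne] with t htA htq
    exact ⟨htA, fun h => htq (by rw [h, sub_self, smul_zero])⟩
  · have h0 : Tendsto (fun t : ℝ => t • t⁻¹ • (γ t - q)) (𝓝[>] 0) (𝓝 ((0 : ℝ) • w)) :=
      (tendsto_nhdsWithin_of_tendsto_nhds tendsto_id).smul hγ
    rw [zero_smul] at h0
    have h1 : Tendsto (fun t => γ t - q) (𝓝[>] 0) (𝓝 0) := h0.congr' <| by
      filter_upwards [self_mem_nhdsWithin] with t (ht : 0 < t)
      rw [smul_inv_smul₀ ht.ne']
    simpa using h1.add_const q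
  · filter_upwards [self_mem_nhdsWithin] with t (ht : 0 < t)
    simp only [Function.comp_apply, norm_smul, norm_inv, Real.norm_of_nonneg ht.le, mul_inv,
      inv_inv, smul_smul]
    congr 1
    field_simp

lemma mem_dirSet_of_hasDerivAt {A : Set E} {q w : E} {γ : ℝ → E} (hw : w ≠ 0)
    (hγA : ∀ᶠ t in 𝓝[>] 0, γ t ∈ A) (hγ : HasDerivAt γ w 0) (hγ0 : γ 0 = q) :
    ‖w‖⁻¹ • w ∈ dirSet A q := by
  refine mem_dirSet_of_tendsto_inv_smul_sub hw hγA ?_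
  have := (hasDerivAt_iff_tendsto_slope.1 hγ).mono_left
    (nhdsWithin_mono _ fun t (ht : 0 < t) => ht.ne')
  refine this.congr fun t => ?_
  rw [slope_def_module, hγ0, sub_zero]

lemma mem_dirSet_preimage_of_hasStrictFDerivAt [CompleteSpace E] {f : E → ℝ} {f' : E →L[ℝ] ℝ}
    {q v w : E} (hf : HasStrictFDerivAt f f' q) (hw : f' w ≠ 0) (hv : f' v = 0) (hv0 : v ≠ 0) :
    ‖v‖⁻¹ • v ∈ dirSet (f ⁻¹' {f q}) q := by
  have hrange : f'.range = ⊤ := by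
    refine LinearMap.range_eq_top.2 fun c => ⟨(c / f' w) • w, ?_⟩
    simp [div_mul_cancel₀ c hw]
  set φ := hf.implicitFunction f f' hrange (f q)
  let v' : f'.ker := ⟨v, hv⟩
  have hline : Tendsto (fun t : ℝ => ((f q, t • v') : ℝ × f'.ker)) (𝓝 0) (𝓝 (f q, 0)) :=
    (continuous_const.prodMk (continuous_id.smul continuous_const)).tendsto' 0 _ (by simp)
  refine mem_dirSet_of_hasDerivAt (γ := fun t => φ (t • v')) hv0 ?_ ?_ ?_
  · exact ((hline.eventually (hf.map_implicitFunction_eq hrange)).filter_mono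
      nhdsWithin_le_nhds)
  · have := (hf.to_implicitFunction hrange).hasFDerivAt.comp_hasDerivAt_of_eq 0
      ((hasDerivAt_id (0 : ℝ)).smul_const v') (zero_smul ℝ v').symm
    simpa [v', φ, Function.comp_def] using this
  · simp [φ]

lemma Real.pow_surjective_of_odd {n : ℕ} (hn : Odd n) :
    Function.Surjective fun x : ℝ => x ^ n := by
  have htop : Tendsto (fun x : ℝ => x ^ n) atTop atTop := tendsto_pow_atTop hn.pos.ne'
  refine (continuous_pow n).surjective htop ?_
  refine (tendsto_neg_atTop_atBot.comp (htop.comp tendsto_neg_atBot_atTop)).congr fun x => ?_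
  simp [hn.neg_pow]

lemma tendsto_zero_of_tendsto_pow_zero {α : Type*} {l : Filter α} {u : α → ℝ} {n : ℕ}
    (h : Tendsto (fun i => u i ^ n) l (𝓝 0)) : Tendsto u l (𝓝 0) := by
  rw [Metric.tendsto_nhds] at h ⊢
  intro ε hε
  filter_upwards [h (ε ^ n) (pow_pos hε n)] with i hi
  rw [Real.dist_0_eq_abs, abs_pow] at hi
  rw [Real.dist_0_eq_abs]
  exact lt_of_pow_lt_pow_left₀ n hε.le hi

def f₀ (v : EuclideanSpace ℝ (Fin 3)) : ℝ := v 2 ^ 5 + v 1 ^ 7 * v 0 + v 0 ^ 15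

noncomputable def f₀' (q : EuclideanSpace ℝ (Fin 3)) : EuclideanSpace ℝ (Fin 3) →L[ℝ] ℝ :=
  (q 1 ^ 7 + 15 * q 0 ^ 14) • EuclideanSpace.proj 0 + (7 * q 1 ^ 6 * q 0) • EuclideanSpace.proj 1
    + (5 * q 2 ^ 4) • EuclideanSpace.proj 2

lemma f₀'_apply (q w : EuclideanSpace ℝ (Fin 3)) :
    f₀' q w = (q 1 ^ 7 + 15 * q 0 ^ 14) * w 0 + 7 * q 1 ^ 6 * q 0 * w 1 + 5 * q 2 ^ 4 * w 2 :=
  rfl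

lemma hasStrictFDerivAt_f₀ (q : EuclideanSpace ℝ (Fin 3)) : HasStrictFDerivAt f₀ (f₀' q) q := by
  have h (i : Fin 3) := PiLp.hasStrictFDerivAt_apply (𝕜 := ℝ) 2 q i
  refine ((((h 2).pow 5).add (((h 1).pow 7).mul (h 0))).add ((h 0).pow 15)).congr_fderiv ?_
  ext w
  simp only [Fin.isValue, Nat.add_one_sub_one, nsmul_eq_mul, Nat.cast_ofNat, add_apply, smul_apply,
    PiLp.proj_apply, smul_eq_mul, f₀'_apply]
  ring

lemma f₀_smul (r : ℝ) (w : EuclideanSpace ℝ (Fin 3)) :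
    f₀ (r • w) = r ^ 5 * (w 2 ^ 5 + r ^ 3 * (w 1 ^ 7 * w 0) + r ^ 10 * w 0 ^ 15) := by
  simp only [f₀, PiLp.smul_apply, smul_eq_mul]
  ring

lemma apply_two_eq_zero_of_mem_dirSet_f₀ {u : EuclideanSpace ℝ (Fin 3)}
    (hu : u ∈ dirSet (f₀ ⁻¹' {0}) 0) : u 2 = 0 := by
  obtain ⟨-, x, hxA, hx0, hxu⟩ := hu
  simp only [sub_zero] at hxu
  set w := fun i => ‖x i‖⁻¹ • x i
  have hw (i : ℕ) : w i 2 ^ 5 + ‖x i‖ ^ 3 * (w i 1 ^ 7 * w i 0) + ‖x i‖ ^ 10 * w i 0 ^ 15 = 0 := by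
    have hxi : x i = ‖x i‖ • w i := (smul_inv_smul₀ (norm_ne_zero_iff.2 (hxA i).2) _).symm
    have := (hxA i).1
    rw [Set.mem_preimage, hxi, f₀_smul, Set.mem_singleton_iff] at this
    exact (mul_eq_zero.1 this).resolve_left (pow_ne_zero _ (norm_ne_zero_iff.2 (hxA i).2))
  have hcoord (j : Fin 3) : Tendsto (fun i => w i j) atTop (𝓝 (u j)) :=
    ((PiLp.continuous_apply 2 _ j).tendsto u).comp hxu
  have hr : Tendsto (fun i => ‖x i‖) atTop (𝓝 0) := by simpa using hx0.norm
  have hlim := (((hcoord 2).pow 5).add ((hr.pow 3).mul (((hcoord 1).pow 7).mul (hcoord 0)))).add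
    ((hr.pow 10).mul ((hcoord 0).pow 15))
  simp only [hw, ne_eq, OfNat.ofNat_ne_zero, not_false_eq_true, zero_pow, zero_mul,
    add_zero] at hlim
  exact pow_eq_zero_iff (n := 5) (by norm_num) |>.1 (tendsto_nhds_unique hlim tendsto_const_nhds)

lemma inv_norm_smul_mem_dirSet_f₀_zero {v : EuclideanSpace ℝ (Fin 3)} (hv2 : v 2 = 0)
    (hv : v ≠ 0) : ‖v‖⁻¹ • v ∈ dirSet (f₀ ⁻¹' {0}) 0 := by
  let c : ℝ → ℝ := fun t => -(t ^ 3 * (v 1 ^ 7 * v 0) + t ^ 10 * v 0 ^ 15)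
  have hsurj := Real.pow_surjective_of_odd (n := 5) (by decide)
  let ζ : ℝ → ℝ := fun t => Function.surjInv hsurj (c t)
  have hζ (t : ℝ) : ζ t ^ 5 = c t := Function.surjInv_eq hsurj (c t)
  let e₂ : EuclideanSpace ℝ (Fin 3) := EuclideanSpace.single 2 1
  refine mem_dirSet_of_tendsto_inv_smul_sub (γ := fun t => t • (v + ζ t • e₂)) hv
    (.of_forall fun t => ?_) ?_
  · change f₀ _ = 0
    rw [f₀_smul]
    simp [e₂, hv2, hζ, c]
  · have hc : Tendsto c (𝓝[>] 0) (𝓝 0) :=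
      ((by fun_prop : Continuous c).tendsto' 0 0 (by simp [c])).mono_left nhdsWithin_le_nhds
    have hζ0 : Tendsto ζ (𝓝[>] 0) (𝓝 0) :=
      tendsto_zero_of_tendsto_pow_zero (hc.congr fun t => (hζ t).symm)
    have := tendsto_const_nhds (x := v) |>.add (hζ0.smul_const e₂)
    rw [zero_smul, add_zero] at this
    refine this.congr' ?_
    filter_upwards [self_mem_nhdsWithin] with t (ht : 0 < t)
    rw [sub_zero, inv_smul_smul₀ ht.ne']

lemma inv_norm_smul_mem_GDir_f₀_of_apply_zero {v : EuclideanSpace ℝ (Fin 3)} (hv0 : v 0 = 0)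
    (hv : v ≠ 0) : ‖v‖⁻¹ • v ∈ GDir (f₀ ⁻¹' {0}) 0 := by
  let e₁ : EuclideanSpace ℝ (Fin 3) := EuclideanSpace.single 1 1
  refine mem_GDir_of_tendsto (l := 𝓝[>] (0 : ℝ)) (q := fun s => s • e₁) ?_ ?_ tendsto_const_nhds
  · filter_upwards [self_mem_nhdsWithin] with s (hs : 0 < s)
    have hq : f₀ (s • e₁) = 0 := by simp [f₀, e₁]
    refine ⟨hq, ?_⟩
    have := mem_dirSet_preimage_of_hasStrictFDerivAt (hasStrictFDerivAt_f₀ (s • e₁))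
      (w := EuclideanSpace.single 0 1) (v := v) ?_ ?_ hv
    · rwa [hq] at this
    · simp [f₀'_apply, e₁, hs.ne']
    · simp [f₀'_apply, e₁, hv0]
  · exact ((by fun_prop : Continuous fun s : ℝ => s • e₁).tendsto' 0 0 (by simp)).mono_left
      nhdsWithin_le_nhds

lemma inv_norm_smul_mem_GDir_f₀_of_apply_one {v : EuclideanSpace ℝ (Fin 3)} (hv1 : v 1 = 0)
    (hv : v ≠ 0) : ‖v‖⁻¹ • v ∈ GDir (f₀ ⁻¹' {0}) 0 := by
  let e₀ : EuclideanSpace ℝ (Fin 3) := EuclideanSpace.single 0 1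
  let e₁ : EuclideanSpace ℝ (Fin 3) := EuclideanSpace.single 1 1
  let q : ℝ → EuclideanSpace ℝ (Fin 3) := fun s => s • e₀ - s ^ 2 • e₁
  let w : ℝ → EuclideanSpace ℝ (Fin 3) := fun s => v - (2 * s * v 0) • e₁
  have hq (s : ℝ) : q s 0 = s ∧ q s 1 = -s ^ 2 ∧ q s 2 = 0 := by simp [q, e₀, e₁]
  have hw (s : ℝ) : w s 0 = v 0 ∧ w s 1 = -(2 * s * v 0) := by simp [w, e₁, hv1]
  have hwv : Tendsto w (𝓝[>] 0) (𝓝 v) :=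
    ((by fun_prop : Continuous w).tendsto' 0 v (by simp [w])).mono_left nhdsWithin_le_nhds
  refine mem_GDir_of_tendsto (l := 𝓝[>] (0 : ℝ)) (q := q) (u := fun s => ‖w s‖⁻¹ • w s) ?_ ?_
    ((tendsto_inv_norm_smul hv).comp hwv)
  · filter_upwards [self_mem_nhdsWithin, hwv.eventually_ne hv] with s (hs : 0 < s) hws
    obtain ⟨hq0, hq1, hq2⟩ := hq s
    have hfq : f₀ (q s) = 0 := by
      rw [f₀, hq0, hq1, hq2]
      ring
    refine ⟨hfq, ?_⟩
    have := mem_dirSet_preimage_of_hasStrictFDerivAt (hasStrictFDerivAt_f₀ (q s)) (w := e₁)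
      ?_ ?_ hws
    · rwa [hfq] at this
    · simp [f₀'_apply, hq0, hq1, e₁, hs.ne']
    · rw [f₀'_apply, hq0, hq1, hq2, (hw s).1, (hw s).2]
      ring
  · exact ((by fun_prop : Continuous q).tendsto' 0 0 (by simp [q])).mono_left nhdsWithin_le_nhds

lemma inv_norm_smul_mem_GDir_f₀ {v : EuclideanSpace ℝ (Fin 3)} (hv : v ≠ 0)
    (h : v 0 = 0 ∨ v 1 = 0 ∨ v 2 = 0) : ‖v‖⁻¹ • v ∈ GDir (f₀ ⁻¹' {0}) 0 := by
  rcases h with h | h | h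
  · exact inv_norm_smul_mem_GDir_f₀_of_apply_zero h hv
  · exact inv_norm_smul_mem_GDir_f₀_of_apply_one h hv
  · exact dirSet_subset_GDir (by simp [f₀]) (inv_norm_smul_mem_dirSet_f₀_zero h hv)

lemma mem_LGDir_f₀ {v : EuclideanSpace ℝ (Fin 3)} (h : v 0 = 0 ∨ v 1 = 0 ∨ v 2 = 0) :
    v ∈ LGDir (f₀ ⁻¹' {0}) 0 :=
  exists_smul_eq_of_inv_norm_smul_mem
    ⟨_, inv_norm_smul_mem_GDir_f₀_of_apply_zero (v := EuclideanSpace.single 2 1) (by simp)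
      (by simp)⟩
    fun hv => inv_norm_smul_mem_GDir_f₀ hv h

lemma LDir_f₀_zero : LDir (f₀ ⁻¹' {0}) 0 = {v : EuclideanSpace ℝ (Fin 3) | v 2 = 0} := by
  ext v
  constructor
  · rintro ⟨a, ha, t, -, rfl⟩
    simp [apply_two_eq_zero_of_mem_dirSet_f₀ ha]
  · intro hv
    exact exists_smul_eq_of_inv_norm_smul_mem
      ⟨_, inv_norm_smul_mem_dirSet_f₀_zero (v := EuclideanSpace.single 0 1) (by simp) (by simp)⟩
      fun hv0 => inv_norm_smul_mem_dirSet_f₀_zero hv hv0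

theorem stmt17 :
    ({v : EuclideanSpace ℝ (Fin 3) | v 0 = 0} ∪
     {v : EuclideanSpace ℝ (Fin 3) | v 1 = 0} ∪
     {v : EuclideanSpace ℝ (Fin 3) | v 2 = 0}
      ⊆ LGDir ((fun v : EuclideanSpace ℝ (Fin 3) =>
          v 2 ^ 5 + v 1 ^ 7 * v 0 + v 0 ^ 15) ⁻¹' {0}) 0) ∧
    ({v : EuclideanSpace ℝ (Fin 3) | v 2 = 0}
      ⊂ LGDir ((fun v : EuclideanSpace ℝ (Fin 3) =>
          v 2 ^ 5 + v 1 ^ 7 * v 0 + v 0 ^ 15) ⁻¹' {0}) 0) ∧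
    LDir ((fun v : EuclideanSpace ℝ (Fin 3) =>
        v 2 ^ 5 + v 1 ^ 7 * v 0 + v 0 ^ 15) ⁻¹' {0}) 0
      = {v : EuclideanSpace ℝ (Fin 3) | v 2 = 0} := by
  have hsub : {v : EuclideanSpace ℝ (Fin 3) | v 0 = 0} ∪ {v | v 1 = 0} ∪ {v | v 2 = 0}
      ⊆ LGDir (f₀ ⁻¹' {0}) 0 := by
    rintro v ((h | h) | h)
    exacts [mem_LGDir_f₀ (.inl h), mem_LGDir_f₀ (.inr (.inl h)), mem_LGDir_f₀ (.inr (.inr h))]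
  refine ⟨hsub, (Set.ssubset_iff_of_subset fun v h => hsub (.inr h)).2 ?_, LDir_f₀_zero⟩
  exact ⟨EuclideanSpace.single 2 1, hsub (.inl (.inl (by simp))), by simp⟩
end

section
/- Let (a_n)_{n≥1} be an enumeration of ℚ ∩ [0,1] and define f : [0,1] → ℝ by f(x) := Σ_{n≥1} 2^{−n}·(x − a_n)^{1/3}, where t^{1/3} denotes the real cube root. Then: (1) f is continuous and strictly increasing, hence a homeomorphism onto [f(0), f(1)]; (2) its inverse g : [f(0), f(1)] → [0,1] is Lipschitz; (3) g is differentiable at every point of the open interval (f(0), f(1)); (4) g′(f(a_n)) = 0 for every n with a_n ∈ (0,1), so the zero set of g′ is dense in (f(0), f(1)); (5) g′ does not vanish identically on (f(0), f(1)). -/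
/-!
On `[-1, 1]` the cube root satisfies `|cbrt| ≤ 1`, so the factorisation
`s - t = (cbrt s - cbrt t) (cbrt s ^ 2 + cbrt s * cbrt t + cbrt t ^ 2)` bounds every difference
quotient of `cbrt` there below by `1 / 3`. The weights `c n = 2⁻¹ ^ (n + 1)` have total mass `1`,
so `f y - f x ≥ (y - x) / 3` on `[0, 1]`: `f` is strictly increasing and its inverse is
`3`-Lipschitz.

The difference quotient of `f` at `x` is a series of nonnegative terms whose `n`-th term tends to
`c n / (3 cbrt (x - a n) ^ 2)`, or to `+∞` when `x = a n`. If `x` is some `a n`, or the series of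
these limits diverges, the difference quotients tend to `+∞` and the inverse has derivative `0`
at `f x`. Otherwise every term is dominated by four times its limit, so `f' x` is the positive
sum of the limits and the inverse has derivative `(f' x)⁻¹`. The first case occurs on the dense
set of rationals. The second occurs somewhere: a measure count gives `x` with
`|x - a n| ≥ c n / 8` for all `n`, and there the limits are at most `4 / 3 * cbrt (c n)`,
a convergent geometric series.
-/
open Filter Topology Set Asymptotics

variable {E : Type*} [NormedAddCommGroup E] [NormedSpace ℝ E]

/-- The real cube root of a real number. -/
noncomputable def cbrt (t : ℝ) : ℝ :=
  if 0 ≤ t then t ^ ((1 : ℝ) / 3) else -((-t) ^ ((1 : ℝ) / 3))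

theorem cbrt_pow_three (t : ℝ) : cbrt t ^ 3 = t := by
  unfold cbrt
  split_ifs with h
  · rw [← Real.rpow_natCast, ← Real.rpow_mul h]
    norm_num
  · rw [neg_pow, ← Real.rpow_natCast ((-t) ^ _), ← Real.rpow_mul (by linarith)]
    norm_num

theorem cbrt_eq_iff {s t : ℝ} : cbrt s = t ↔ s = t ^ 3 := by
  rw [← (Odd.strictMono_pow (by decide : Odd 3)).injective.eq_iff, cbrt_pow_three]

theorem cbrt_strictMono : StrictMono cbrt := fun s t hst => by
  by_contra! h
  have := (Odd.strictMono_pow (by decide : Odd 3)).monotone h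
  simp only [cbrt_pow_three] at this
  linarith

@[simp] theorem cbrt_zero : cbrt 0 = 0 := cbrt_eq_iff.2 (by norm_num)

@[simp] theorem cbrt_one : cbrt 1 = 1 := cbrt_eq_iff.2 (by norm_num)

@[simp] theorem cbrt_eq_zero_iff {t : ℝ} : cbrt t = 0 ↔ t = 0 := by
  simp [cbrt_eq_iff]

theorem cbrt_pow (t : ℝ) (n : ℕ) : cbrt (t ^ n) = cbrt t ^ n :=
  cbrt_eq_iff.2 (by rw [← pow_mul, mul_comm, pow_mul, cbrt_pow_three])

theorem abs_cbrt (t : ℝ) : |cbrt t| = cbrt |t| :=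
  (cbrt_eq_iff.2 (by rw [← abs_pow, cbrt_pow_three])).symm

theorem abs_cbrt_le (t : ℝ) : |cbrt t| ≤ 1 + |t| := by
  have h : |cbrt t| ^ 3 = |t| := by rw [← abs_pow, cbrt_pow_three]
  nlinarith [abs_nonneg (cbrt t), sq_nonneg (|cbrt t| - 1), sq_nonneg (|cbrt t| + 1)]

theorem abs_cbrt_le_one {t : ℝ} (ht : |t| ≤ 1) : |cbrt t| ≤ 1 := by
  simpa [abs_cbrt] using cbrt_strictMono.monotone ht

theorem continuous_cbrt : Continuous cbrt := by
  refine Continuous.if_le ?_ ?_ continuous_const continuous_id fun x hx => by simp [← hx]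
  · exact Real.continuous_rpow_const (by norm_num)
  · exact ((Real.continuous_rpow_const (by norm_num)).comp continuous_neg).neg

theorem hasDerivAt_cbrt {s : ℝ} (hs : s ≠ 0) : HasDerivAt cbrt (3 * cbrt s ^ 2)⁻¹ s := by
  have hcube : HasDerivAt (· ^ 3) (3 * cbrt s ^ 2) (cbrt s) := by
    simpa using hasDerivAt_pow 3 (cbrt s)
  exact hcube.of_local_left_inverse continuous_cbrt.continuousAt
    (by simpa using hs) (.of_forall cbrt_pow_three)

theorem slope_cbrt {s t : ℝ} (h : s ≠ t) :
    slope cbrt s t = (cbrt s ^ 2 + cbrt s * cbrt t + cbrt t ^ 2)⁻¹ := by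
  have hne : cbrt t - cbrt s ≠ 0 := sub_ne_zero.2 (cbrt_strictMono.injective.ne h.symm)
  have hts : t - s = (cbrt t - cbrt s) * (cbrt s ^ 2 + cbrt s * cbrt t + cbrt t ^ 2) := by
    nlinarith [cbrt_pow_three s, cbrt_pow_three t]
  rw [slope_def_field, hts, div_mul_eq_div_div, div_self hne, one_div]

theorem slope_cbrt_nonneg (s t : ℝ) : 0 ≤ slope cbrt s t :=
  cbrt_strictMono.monotone.monotoneOn univ |>.slope_nonneg trivial trivial

theorem one_third_le_slope_cbrt {s t : ℝ} (hs : |s| ≤ 1) (ht : |t| ≤ 1) (h : s ≠ t) :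
    1 / 3 ≤ slope cbrt s t := by
  obtain ⟨hs₁, hs₂⟩ := abs_le.1 (abs_cbrt_le_one hs)
  obtain ⟨ht₁, ht₂⟩ := abs_le.1 (abs_cbrt_le_one ht)
  have huv : cbrt s - cbrt t ≠ 0 := sub_ne_zero.2 (cbrt_strictMono.injective.ne h)
  have hQ : 0 < cbrt s ^ 2 + cbrt s * cbrt t + cbrt t ^ 2 := by
    nlinarith [sq_nonneg (cbrt s + cbrt t), sq_pos_of_ne_zero huv]
  rw [slope_cbrt h, one_div]
  exact inv_anti₀ hQ (by nlinarith)

theorem slope_cbrt_le {s : ℝ} (hs : s ≠ 0) (t : ℝ) : slope cbrt s t ≤ 4 * (3 * cbrt s ^ 2)⁻¹ := by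
  rcases eq_or_ne s t with rfl | h
  · rw [slope_same]; positivity
  have hu : cbrt s ≠ 0 := by simpa using hs
  rw [slope_cbrt h]
  have hQ : 3 * cbrt s ^ 2 / 4 ≤ cbrt s ^ 2 + cbrt s * cbrt t + cbrt t ^ 2 := by
    nlinarith [sq_nonneg (cbrt t + cbrt s / 2)]
  calc _ ≤ (3 * cbrt s ^ 2 / 4)⁻¹ := inv_anti₀ (by positivity) hQ
    _ = _ := by field_simp

theorem tendsto_slope_cbrt {s : ℝ} (hs : s ≠ 0) :
    Tendsto (slope cbrt s) (𝓝[≠] s) (𝓝 (3 * cbrt s ^ 2)⁻¹) :=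
  hasDerivAt_iff_tendsto_slope.1 (hasDerivAt_cbrt hs)

theorem tendsto_slope_cbrt_zero : Tendsto (slope cbrt 0) (𝓝[≠] 0) atTop := by
  have hsq : Tendsto (fun t => cbrt t ^ 2) (𝓝[≠] 0) (𝓝[>] 0) := by
    refine tendsto_nhdsWithin_iff.2 ⟨?_, eventually_nhdsWithin_of_forall fun t ht => ?_⟩
    · exact ((continuous_cbrt.pow 2).tendsto' 0 0 (by simp)).mono_left nhdsWithin_le_nhds
    · have : cbrt t ≠ 0 := by simpa using ht
      exact mem_Ioi.2 (by positivity)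
  refine (tendsto_inv_nhdsGT_zero.comp hsq).congr' (eventually_nhdsWithin_of_forall fun t ht => ?_)
  simp [slope_cbrt (Ne.symm ht)]

section Series

variable {α : Type*} {l : Filter α} {F : ℕ → α → ℝ} {S : α → ℝ}

theorem tendsto_atTop_of_hasSum_of_tendsto_atTop (hS : ∀ᶠ y in l, HasSum (F · y) (S y))
    (hF : ∀ᶠ y in l, ∀ n, 0 ≤ F n y) {m : ℕ} (hm : Tendsto (F m) l atTop) :
    Tendsto S l atTop :=
  tendsto_atTop_mono' l ((hS.and hF).mono fun _ h => le_hasSum h.1 m fun n _ => h.2 n) hm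

theorem tendsto_atTop_of_hasSum_of_not_summable (hS : ∀ᶠ y in l, HasSum (F · y) (S y))
    (hF : ∀ᶠ y in l, ∀ n, 0 ≤ F n y) {L : ℕ → ℝ} (hL : ∀ n, Tendsto (F n) l (𝓝 (L n)))
    (hL₀ : ∀ n, 0 ≤ L n) (hns : ¬ Summable L) : Tendsto S l atTop := by
  refine tendsto_atTop.2 fun M => ?_
  obtain ⟨N, hN⟩ :=
    (((not_summable_iff_tendsto_nat_atTop_of_nonneg hL₀).1 hns).eventually_gt_atTop M).exists
  have hpartial : Tendsto (fun y => ∑ n ∈ Finset.range N, F n y) l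
      (𝓝 (∑ n ∈ Finset.range N, L n)) :=
    tendsto_finsetSum _ fun n _ => hL n
  filter_upwards [hpartial.eventually (eventually_gt_nhds hN), hS, hF] with y hy hSy hFy
  exact hy.le.trans (sum_le_hasSum _ (fun n _ => hFy n) hSy)

end Series

theorem exists_mem_Ioo_forall_le_abs_sub {ε : ℕ → ℝ} (hε : ∀ n, 0 ≤ ε n) (hεs : Summable ε)
    {u v : ℝ} (h : 2 * ∑' n, ε n < v - u) (a : ℕ → ℝ) : ∃ x ∈ Ioo u v, ∀ n, ε n ≤ |x - a n| := by
  by_contra! hcover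
  have hsub : Ioo u v ⊆ ⋃ n, Metric.ball (a n) (ε n) := fun x hx => by
    obtain ⟨n, hn⟩ := hcover x hx
    exact mem_iUnion.2 ⟨n, by rwa [Metric.mem_ball, Real.dist_eq]⟩
  have hvol := (MeasureTheory.measure_mono (μ := MeasureTheory.volume) hsub).trans
    (MeasureTheory.measure_iUnion_le _)
  simp only [Real.volume_Ioo, Real.volume_ball] at hvol
  rw [← ENNReal.ofReal_tsum_of_nonneg (fun n => by linarith [hε n]) (hεs.mul_left 2),
    ENNReal.ofReal_le_ofReal_iff (tsum_nonneg fun n => by linarith [hε n]), tsum_mul_left] at hvol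
  linarith

theorem lipschitzOnWith_of_le_mul_dist {X Y : Type*} [PseudoMetricSpace X] [PseudoMetricSpace Y]
    {f : X → Y} {g : Y → X} {s : Set X} {t : Set Y} {K : NNReal} (hg : MapsTo g t s)
    (hfg : ∀ y ∈ t, f (g y) = y) (h : ∀ x ∈ s, ∀ x' ∈ s, dist x x' ≤ K * dist (f x) (f x')) :
    LipschitzOnWith K g t :=
  LipschitzOnWith.of_dist_le_mul fun y hy y' hy' => by
    simpa only [hfg y hy, hfg y' hy'] using h _ (hg hy) _ (hg hy')

section Inverse

variable {f g : ℝ → ℝ}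

theorem exists_homeomorph_Icc_of_strictMonoOn {u v : ℝ} (huv : u ≤ v)
    (hf : ContinuousOn f (Icc u v)) (hmono : StrictMonoOn f (Icc u v)) :
    ∃ φ : Icc u v ≃ₜ Icc (f u) (f v), ∀ x : Icc u v, (φ x : ℝ) = f x := by
  have hmaps : MapsTo f (Icc u v) (Icc (f u) (f v)) := fun x hx =>
    ⟨hmono.monotoneOn ⟨le_rfl, huv⟩ hx hx.1, hmono.monotoneOn hx ⟨huv, le_rfl⟩ hx.2⟩
  have hbij : Function.Bijective (hmaps.restrict f _ _) :=
    ⟨hmaps.restrict_inj.2 hmono.injOn,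
      (MapsTo.restrict_surjective_iff hmaps).2 (intermediate_value_Icc huv hf)⟩
  exact ⟨(hf.mapsToRestrict hmaps).homeoOfEquivCompactToT2 (f := Equiv.ofBijective _ hbij),
    fun _ => rfl⟩

theorem exists_continuous_inverse_of_strictMonoOn {u v : ℝ} (huv : u ≤ v)
    (hf : ContinuousOn f (Icc u v)) (hmono : StrictMonoOn f (Icc u v)) :
    ∃ g : ℝ → ℝ, Continuous g ∧ (∀ x ∈ Icc u v, g (f x) = x) ∧
      ∀ y ∈ Icc (f u) (f v), g y ∈ Icc u v ∧ f (g y) = y := by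
  obtain ⟨φ, hφ⟩ := exists_homeomorph_Icc_of_strictMonoOn huv hf hmono
  have hfuv : f u ≤ f v := hmono.monotoneOn ⟨le_rfl, huv⟩ ⟨huv, le_rfl⟩ huv
  refine ⟨fun y => φ.symm (projIcc _ _ hfuv y),
    continuous_subtype_val.comp (φ.symm.continuous.comp continuous_projIcc), fun x hx => ?_,
    fun y hy => ⟨Subtype.prop _, ?_⟩⟩
  · have hfx : f x ∈ Icc (f u) (f v) := hφ ⟨x, hx⟩ ▸ (φ ⟨x, hx⟩).2
    change (φ.symm (projIcc _ _ hfuv (f x)) : ℝ) = x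
    rw [projIcc_of_mem _ hfx, show (⟨f x, hfx⟩ : Icc (f u) (f v)) = φ ⟨x, hx⟩ from
      Subtype.ext (hφ ⟨x, hx⟩).symm, Homeomorph.symm_apply_apply]
  · rw [← hφ, projIcc_of_mem _ hy, Homeomorph.apply_symm_apply]

theorem HasDerivAt.of_local_left_inverse_of_tendsto_slope_atTop {x : ℝ}
    (hg : ContinuousAt g (f x)) (hgf : g (f x) = x) (hfg : ∀ᶠ y in 𝓝 (f x), f (g y) = y)
    (hf : Tendsto (slope f x) (𝓝[≠] x) atTop) : HasDerivAt g 0 (f x) := by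
  have hfg' : ∀ᶠ y in 𝓝[≠] (f x), f (g y) = y ∧ y ≠ f x :=
    (hfg.filter_mono nhdsWithin_le_nhds).and self_mem_nhdsWithin
  have hgx : Tendsto g (𝓝[≠] (f x)) (𝓝[≠] x) := by
    have hg' := hg.tendsto
    rw [hgf] at hg'
    refine tendsto_nhdsWithin_iff.2 ⟨hg'.mono_left nhdsWithin_le_nhds, ?_⟩
    filter_upwards [hfg'] with y ⟨hy, hne⟩
    exact fun h => hne (by rw [← hy, show g y = x from h])
  rw [hasDerivAt_iff_tendsto_slope]
  refine (hf.comp hgx).inv_tendsto_atTop.congr' ?_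
  filter_upwards [hfg'] with y ⟨hy, _⟩
  simp only [Pi.inv_apply, Function.comp_apply, slope_def_field, inv_div, hgf, hy]

theorem Icc_subset_closure_image_inter_Ioo {s : Set ℝ} (hs : Dense s) {u v : ℝ} (huv : u < v)
    (hf : ContinuousOn f (Icc u v)) : Icc (f u) (f v) ⊆ closure (f '' (s ∩ Ioo u v)) := by
  have hcl : closure (s ∩ Ioo u v) = Icc u v := by
    refine subset_antisymm (closure_minimal (inter_subset_right.trans Ioo_subset_Icc_self)
      isClosed_Icc) ?_
    rw [← closure_Ioo huv.ne, inter_comm]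
    exact closure_minimal (hs.open_subset_closure_inter isOpen_Ioo) isClosed_closure
  have hsurj := intermediate_value_Icc huv.le hf
  rw [← hcl] at hf hsurj
  exact hsurj.trans hf.image_closure

end Inverse

theorem tendsto_sub_const_nhdsNE (x b : ℝ) : Tendsto (· - b) (𝓝[≠] x) (𝓝[≠] (x - b)) :=
  ((continuous_sub_right b).tendsto x).inf
    (tendsto_principal_principal.2 fun _ hy h => hy (by simpa using h))

theorem tendsto_slope_cbrt_sub {x b : ℝ} (h : x ≠ b) :
    Tendsto (fun y => slope cbrt (x - b) (y - b)) (𝓝[≠] x) (𝓝 (3 * cbrt (x - b) ^ 2)⁻¹) :=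
  (tendsto_slope_cbrt (sub_ne_zero.2 h)).comp (tendsto_sub_const_nhdsNE x b)

theorem tsum_mul_inv_cbrt_sq_pos {c a : ℕ → ℝ} (hc : ∀ n, 0 < c n) {x : ℝ} (hx : ∀ n, x ≠ a n)
    (hs : Summable fun n => c n * (3 * cbrt (x - a n) ^ 2)⁻¹) :
    0 < ∑' n, c n * (3 * cbrt (x - a n) ^ 2)⁻¹ := by
  have hne : ∀ n, cbrt (x - a n) ≠ 0 := fun n => by simpa [sub_eq_zero] using hx n
  exact hs.tsum_pos (fun n => by have := hc n; positivity) 0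
    (by have := hc 0; have := hne 0; positivity)

theorem exists_forall_ne_summable_inv_cbrt_sq {c : ℕ → ℝ} (hc : ∀ n, 0 < c n)
    (hcs : Summable c) (hc1 : ∑' n, c n ≤ 1) (hcbrt : Summable fun n => cbrt (c n))
    (a : ℕ → ℝ) : ∃ x ∈ Ioo (0 : ℝ) 1,
      (∀ n, x ≠ a n) ∧ Summable fun n => c n * (3 * cbrt (x - a n) ^ 2)⁻¹ := by
  obtain ⟨x, hx, hdist⟩ :=
    exists_mem_Ioo_forall_le_abs_sub (ε := fun n => c n / 8) (u := 0) (v := 1)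
      (fun n => (div_pos (hc n) (by norm_num)).le) (hcs.div_const 8)
      (by rw [tsum_div_const]; linarith) a
  refine ⟨x, hx, fun n h => ?_, ?_⟩
  · have := hdist n
    rw [h, sub_self, abs_zero] at this
    linarith [hc n]
  refine (hcbrt.mul_left (4 / 3)).of_nonneg_of_le (fun n => ?_) (fun n => ?_)
  · have := hc n
    positivity
  have hcb : cbrt (c n / 8) = cbrt (c n) / 2 :=
    cbrt_eq_iff.2 (by rw [div_pow, cbrt_pow_three]; norm_num)
  have hpos : 0 < cbrt (c n) := by simpa using cbrt_strictMono (hc n)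
  have hle : (cbrt (c n) / 2) ^ 2 ≤ cbrt (x - a n) ^ 2 := by
    rw [← hcb, ← sq_abs (cbrt (x - a n)), abs_cbrt]
    exact pow_le_pow_left₀ (hcb ▸ by positivity) (cbrt_strictMono.monotone (hdist n)) 2
  calc c n * (3 * cbrt (x - a n) ^ 2)⁻¹ ≤ c n * (3 * (cbrt (c n) / 2) ^ 2)⁻¹ := by
        gcongr
        exact (hc n).le
    _ = 4 / 3 * cbrt (c n) := by
        nth_rw 1 [← cbrt_pow_three (c n)]
        field_simp
        norm_num

noncomputable def cbrtSeries (c a : ℕ → ℝ) (x : ℝ) : ℝ :=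
  ∑' n, c n * cbrt (x - a n)

namespace cbrtSeries

variable {c a : ℕ → ℝ}

theorem summable (hc : Summable c) (ha : ∀ n, a n ∈ Icc (0 : ℝ) 1) (x : ℝ) :
    Summable fun n => c n * cbrt (x - a n) := by
  refine (hc.abs.mul_right (2 + |x|)).of_norm_bounded fun n => ?_
  rw [norm_mul, Real.norm_eq_abs, Real.norm_eq_abs]
  have : |x - a n| ≤ |x| + 1 := (abs_sub _ _).trans (by simp [abs_of_nonneg (ha n).1, (ha n).2])
  exact mul_le_mul_of_nonneg_left ((abs_cbrt_le _).trans (by linarith)) (abs_nonneg _)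

theorem continuous (hc : Summable c) (ha : ∀ n, a n ∈ Icc (0 : ℝ) 1) :
    Continuous (cbrtSeries c a) := by
  refine continuous_iff_continuousAt.2 fun z => ?_
  have hon : ContinuousOn (cbrtSeries c a) (Icc (z - 1) (z + 1)) := by
    refine continuousOn_tsum (u := fun n => |c n| * (3 + |z|))
      (fun n => (continuous_const.mul (continuous_cbrt.comp (continuous_sub_right _))).continuousOn)
      (hc.abs.mul_right _) fun n x hx => ?_
    rw [norm_mul, Real.norm_eq_abs, Real.norm_eq_abs]
    have : |x - a n| ≤ |z| + 2 := abs_le.2 ⟨by linarith [neg_abs_le z, (ha n).2, hx.1],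
      by linarith [le_abs_self z, (ha n).1, hx.2]⟩
    exact mul_le_mul_of_nonneg_left ((abs_cbrt_le _).trans (by linarith)) (abs_nonneg _)
  exact hon.continuousAt (Icc_mem_nhds (by linarith) (by linarith))

theorem hasSum_slope (hc : Summable c) (ha : ∀ n, a n ∈ Icc (0 : ℝ) 1) (x y : ℝ) :
    HasSum (fun n => c n * slope cbrt (x - a n) (y - a n)) (slope (cbrtSeries c a) x y) := by
  have h := ((summable hc ha y).hasSum.sub (summable hc ha x).hasSum).mul_left (y - x)⁻¹
  rw [slope_def_field, div_eq_inv_mul]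
  refine h.congr_fun fun n => ?_
  rw [slope_def_field, sub_sub_sub_cancel_right]
  ring

theorem tsum_div_three_le_slope (hc : ∀ n, 0 ≤ c n) (hcs : Summable c)
    (ha : ∀ n, a n ∈ Icc (0 : ℝ) 1)
    {x y : ℝ} (hx : x ∈ Icc (0 : ℝ) 1) (hy : y ∈ Icc (0 : ℝ) 1) (hxy : x ≠ y) :
    (∑' n, c n) / 3 ≤ slope (cbrtSeries c a) x y := by
  have habs : ∀ {z}, z ∈ Icc (0 : ℝ) 1 → ∀ n, |z - a n| ≤ 1 := fun hz n =>
    abs_le.2 ⟨by linarith [hz.1, (ha n).2], by linarith [hz.2, (ha n).1]⟩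
  rw [← tsum_div_const]
  refine hasSum_le (fun n => ?_) (hcs.div_const 3).hasSum (hasSum_slope hcs ha x y)
  have := one_third_le_slope_cbrt (habs hx n) (habs hy n) (by contrapose! hxy; linarith)
  nlinarith [hc n]

theorem strictMonoOn (hc : ∀ n, 0 < c n) (hcs : Summable c) (ha : ∀ n, a n ∈ Icc (0 : ℝ) 1) :
    StrictMonoOn (cbrtSeries c a) (Icc 0 1) := fun _ hx _ hy hxy =>
  (slope_pos_iff_of_le hxy.le).1 <|
    (div_pos (hcs.tsum_pos (fun n => (hc n).le) 0 (hc 0)) three_pos).trans_le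
      (tsum_div_three_le_slope (fun n => (hc n).le) hcs ha hx hy hxy.ne)

theorem dist_le_three_mul_dist (hc : ∀ n, 0 ≤ c n) (hcs : Summable c)
    (ha : ∀ n, a n ∈ Icc (0 : ℝ) 1) (hc1 : ∑' n, c n = 1) {x y : ℝ} (hx : x ∈ Icc (0 : ℝ) 1)
    (hy : y ∈ Icc (0 : ℝ) 1) : dist x y ≤ 3 * dist (cbrtSeries c a x) (cbrtSeries c a y) := by
  rcases eq_or_ne x y with rfl | hxy
  · simp
  have h := tsum_div_three_le_slope hc hcs ha hx hy hxy
  rw [hc1] at h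
  rw [Real.dist_eq, Real.dist_eq, abs_sub_comm, abs_sub_comm (cbrtSeries c a x),
    ← vsub_eq_sub (cbrtSeries c a y), ← sub_smul_slope, smul_eq_mul, abs_mul,
    abs_of_pos ((by norm_num : (0:ℝ) < 1 / 3).trans_le h)]
  nlinarith [abs_nonneg (y - x)]

theorem hasDerivAt (hc : ∀ n, 0 ≤ c n) (hcs : Summable c) (ha : ∀ n, a n ∈ Icc (0 : ℝ) 1)
    {x : ℝ} (hx : ∀ n, x ≠ a n) (hsum : Summable fun n => c n * (3 * cbrt (x - a n) ^ 2)⁻¹) :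
    HasDerivAt (cbrtSeries c a) (∑' n, c n * (3 * cbrt (x - a n) ^ 2)⁻¹) x := by
  rw [hasDerivAt_iff_tendsto_slope, funext fun y => ((hasSum_slope hcs ha x y).tsum_eq).symm]
  refine tendsto_tsum_of_dominated_convergence (hsum.mul_left 4)
    (fun n => (tendsto_slope_cbrt_sub (hx n)).const_mul (c n)) (.of_forall fun y n => ?_)
  rw [norm_mul, Real.norm_eq_abs, Real.norm_eq_abs, abs_of_nonneg (hc n),
    abs_of_nonneg (slope_cbrt_nonneg _ _), mul_left_comm]
  exact mul_le_mul_of_nonneg_left (slope_cbrt_le (sub_ne_zero.2 (hx n)) _) (hc n)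

theorem tendsto_slope_atTop (hc : ∀ n, 0 < c n) (hcs : Summable c)
    (ha : ∀ n, a n ∈ Icc (0 : ℝ) 1) {x : ℝ}
    (hx : x ∈ range a ∨ ¬ Summable fun n => c n * (3 * cbrt (x - a n) ^ 2)⁻¹) :
    Tendsto (slope (cbrtSeries c a) x) (𝓝[≠] x) atTop := by
  have hS := Eventually.of_forall (f := 𝓝[≠] x) (hasSum_slope hcs ha x)
  have hF : ∀ᶠ y in 𝓝[≠] x, ∀ n, 0 ≤ c n * slope cbrt (x - a n) (y - a n) :=
    .of_forall fun _ n => mul_nonneg (hc n).le (slope_cbrt_nonneg _ _)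
  by_cases hxa : x ∈ range a
  · obtain ⟨m, rfl⟩ := hxa
    refine tendsto_atTop_of_hasSum_of_tendsto_atTop hS hF (m := m) ?_
    have h0 := tendsto_sub_const_nhdsNE (a m) (a m)
    rw [sub_self] at h0
    simpa only [sub_self, Function.comp_def] using
      (tendsto_slope_cbrt_zero.comp h0).const_mul_atTop (hc m)
  · have hne : ∀ n, x ≠ a n := fun n h => hxa ⟨n, h.symm⟩
    exact tendsto_atTop_of_hasSum_of_not_summable hS hF
      (fun n => (tendsto_slope_cbrt_sub (hne n)).const_mul (c n))
      (fun n => mul_nonneg (hc n).le (by positivity)) (hx.resolve_left hxa)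

section LocalInverse

variable {g : ℝ → ℝ} {x : ℝ}

theorem hasDerivAt_zero_of_local_left_inverse (hc : ∀ n, 0 < c n) (hcs : Summable c)
    (ha : ∀ n, a n ∈ Icc (0 : ℝ) 1)
    (hx : x ∈ range a ∨ ¬ Summable fun n => c n * (3 * cbrt (x - a n) ^ 2)⁻¹)
    (hg : ContinuousAt g (cbrtSeries c a x)) (hgf : g (cbrtSeries c a x) = x)
    (hfg : ∀ᶠ y in 𝓝 (cbrtSeries c a x), cbrtSeries c a (g y) = y) :
    HasDerivAt g 0 (cbrtSeries c a x) :=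
  .of_local_left_inverse_of_tendsto_slope_atTop hg hgf hfg (tendsto_slope_atTop hc hcs ha hx)

theorem hasDerivAt_inv_tsum_of_local_left_inverse (hc : ∀ n, 0 < c n) (hcs : Summable c)
    (ha : ∀ n, a n ∈ Icc (0 : ℝ) 1) (hx : ∀ n, x ≠ a n)
    (hs : Summable fun n => c n * (3 * cbrt (x - a n) ^ 2)⁻¹)
    (hg : ContinuousAt g (cbrtSeries c a x)) (hgf : g (cbrtSeries c a x) = x)
    (hfg : ∀ᶠ y in 𝓝 (cbrtSeries c a x), cbrtSeries c a (g y) = y) :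
    HasDerivAt g (∑' n, c n * (3 * cbrt (x - a n) ^ 2)⁻¹)⁻¹ (cbrtSeries c a x) :=
  .of_local_left_inverse hg (hgf.symm ▸ hasDerivAt (fun n => (hc n).le) hcs ha hx hs)
    (tsum_mul_inv_cbrt_sq_pos hc hx hs).ne' hfg

theorem differentiableAt_of_local_left_inverse (hc : ∀ n, 0 < c n) (hcs : Summable c)
    (ha : ∀ n, a n ∈ Icc (0 : ℝ) 1) (hg : ContinuousAt g (cbrtSeries c a x))
    (hgf : g (cbrtSeries c a x) = x)
    (hfg : ∀ᶠ y in 𝓝 (cbrtSeries c a x), cbrtSeries c a (g y) = y) :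
    DifferentiableAt ℝ g (cbrtSeries c a x) := by
  by_cases hx : x ∈ range a ∨ ¬ Summable fun n => c n * (3 * cbrt (x - a n) ^ 2)⁻¹
  · exact (hasDerivAt_zero_of_local_left_inverse hc hcs ha hx hg hgf hfg).differentiableAt
  · obtain ⟨hxa, hs⟩ := not_or.1 hx
    exact (hasDerivAt_inv_tsum_of_local_left_inverse hc hcs ha (fun n h => hxa ⟨n, h.symm⟩)
      (not_not.1 hs) hg hgf hfg).differentiableAt

end LocalInverse

end cbrtSeries

theorem summable_inv_two_pow_succ : Summable fun n : ℕ => (2 : ℝ)⁻¹ ^ (n + 1) :=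
  (summable_nat_add_iff 1).2 (summable_geometric_of_lt_one (by norm_num) (by norm_num))

theorem tsum_inv_two_pow_succ : ∑' n : ℕ, (2 : ℝ)⁻¹ ^ (n + 1) = 1 := by
  simp only [pow_succ, tsum_mul_right, tsum_geometric_inv_two]
  norm_num

theorem summable_cbrt_inv_two_pow_succ : Summable fun n : ℕ => cbrt ((2 : ℝ)⁻¹ ^ (n + 1)) := by
  simp only [cbrt_pow]
  refine (summable_nat_add_iff 1).2 (summable_geometric_of_lt_one ?_ ?_)
  · simpa using cbrt_strictMono.monotone (by norm_num : (0 : ℝ) ≤ 2⁻¹)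
  · simpa using cbrt_strictMono (by norm_num : (2 : ℝ)⁻¹ < 1)

theorem stmt19_general (a : ℕ → ℝ)
    (ha : Set.range a = Set.Icc (0 : ℝ) 1 ∩ Set.range ((↑) : ℚ → ℝ))
    (f : ℝ → ℝ)
    (hf : ∀ x, f x = ∑' n : ℕ, ((2 : ℝ)⁻¹) ^ (n + 1) * cbrt (x - a n)) :
    -- (1) `f` is continuous and strictly increasing on `[0,1]`, hence a homeomorphism
    -- onto `[f 0, f 1]`
    ContinuousOn f (Set.Icc 0 1) ∧ StrictMonoOn f (Set.Icc 0 1) ∧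
    (∃ φ : Set.Icc (0 : ℝ) 1 ≃ₜ Set.Icc (f 0) (f 1), ∀ x : Set.Icc (0 : ℝ) 1,
      (φ x : ℝ) = f (x : ℝ)) ∧
    -- (2)-(5): the inverse `g`
    ∃ g : ℝ → ℝ,
      (∀ x ∈ Set.Icc (0 : ℝ) 1, g (f x) = x) ∧
      (∀ y ∈ Set.Icc (f 0) (f 1), g y ∈ Set.Icc (0 : ℝ) 1 ∧ f (g y) = y) ∧
      -- (2) `g` is Lipschitz
      (∃ K : NNReal, LipschitzOnWith K g (Set.Icc (f 0) (f 1))) ∧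
      ∃ g' : ℝ → ℝ,
        -- (3) `g` is differentiable on the open interval
        (∀ y ∈ Set.Ioo (f 0) (f 1), HasDerivAt g (g' y) y) ∧
        -- (4) the derivative vanishes at every `f (a n)` with `a n ∈ (0,1)`,
        -- and the zero set of `g'` is dense in `(f 0, f 1)`
        (∀ n : ℕ, a n ∈ Set.Ioo (0 : ℝ) 1 → g' (f (a n)) = 0) ∧
        Set.Ioo (f 0) (f 1) ⊆ closure {y ∈ Set.Ioo (f 0) (f 1) | g' y = 0} ∧
        -- (5) `g'` does not vanish identically
        ¬ ∀ y ∈ Set.Ioo (f 0) (f 1), g' y = 0 := by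
  set c : ℕ → ℝ := fun n => (2 : ℝ)⁻¹ ^ (n + 1)
  obtain rfl : f = cbrtSeries c a := funext hf
  have hc : ∀ n, 0 < c n := fun n => by positivity
  have hcs : Summable c := summable_inv_two_pow_succ
  have haI : ∀ n, a n ∈ Icc (0 : ℝ) 1 := fun n => (ha.subset (mem_range_self n)).1
  have hcont := (cbrtSeries.continuous hcs haI).continuousOn (s := Icc 0 1)
  have hmono := cbrtSeries.strictMonoOn hc hcs haI
  obtain ⟨g, hg, hgf, hfg⟩ := exists_continuous_inverse_of_strictMonoOn zero_le_one hcont hmono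
  have hloc : ∀ y ∈ Ioo (cbrtSeries c a 0) (cbrtSeries c a 1),
      ∀ᶠ z in 𝓝 y, cbrtSeries c a (g z) = z := fun y hy =>
    eventually_of_mem (isOpen_Ioo.mem_nhds hy) fun z hz => (hfg z (Ioo_subset_Icc_self hz)).2
  have hzero : ∀ n, a n ∈ Ioo (0 : ℝ) 1 → HasDerivAt g 0 (cbrtSeries c a (a n)) := fun n hn =>
    cbrtSeries.hasDerivAt_zero_of_local_left_inverse hc hcs haI (.inl ⟨n, rfl⟩) hg.continuousAt
      (hgf _ (haI n)) (hloc _ (hmono.mapsTo_Ioo hn))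
  refine ⟨hcont, hmono, exists_homeomorph_Icc_of_strictMonoOn zero_le_one hcont hmono, g, hgf, hfg,
    ⟨3, lipschitzOnWith_of_le_mul_dist (fun y hy => (hfg y hy).1) (fun y hy => (hfg y hy).2)
      fun x hx x' hx' => cbrtSeries.dist_le_three_mul_dist (fun n => (hc n).le) hcs haI
        tsum_inv_two_pow_succ hx hx'⟩,
    deriv g, fun y hy => ?_, fun n hn => (hzero n hn).deriv, ?_, ?_⟩
  · obtain ⟨-, hy'⟩ := hfg y (Ioo_subset_Icc_self hy)
    rw [← hy']
    exact (cbrtSeries.differentiableAt_of_local_left_inverse hc hcs haI hg.continuousAt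
      (by rw [hy']) (by rw [hy']; exact hloc y hy)).hasDerivAt
  · refine Ioo_subset_Icc_self.trans <| (Icc_subset_closure_image_inter_Ioo Rat.denseRange_cast
      zero_lt_one hcont).trans (closure_mono ?_)
    rintro _ ⟨x, ⟨⟨q, rfl⟩, hx⟩, rfl⟩
    obtain ⟨n, hn⟩ := ha.superset ⟨Ioo_subset_Icc_self hx, q, rfl⟩
    exact ⟨hmono.mapsTo_Ioo hx, hn ▸ (hzero n (hn ▸ hx)).deriv⟩
  · obtain ⟨x, hx, hxa, hs⟩ := exists_forall_ne_summable_inv_cbrt_sq hc hcs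
      tsum_inv_two_pow_succ.le summable_cbrt_inv_two_pow_succ a
    intro h
    have h' := (cbrtSeries.hasDerivAt_inv_tsum_of_local_left_inverse hc hcs haI hxa hs
      hg.continuousAt (hgf x (Ioo_subset_Icc_self hx)) (hloc _ (hmono.mapsTo_Ioo hx))).deriv
    exact (inv_pos.2 (tsum_mul_inv_cbrt_sq_pos hc hxa hs)).ne'
      (h' ▸ h _ (hmono.mapsTo_Ioo hx))

/-- Pompeiu-type example. -/
theorem stmt19 (a : ℕ → ℝ)
    (ha : Set.range a = Set.Icc (0 : ℝ) 1 ∩ Set.range ((↑) : ℚ → ℝ))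
    (hainj : Function.Injective a)
    (f : ℝ → ℝ)
    (hf : ∀ x, f x = ∑' n : ℕ, ((2 : ℝ)⁻¹) ^ (n + 1) * cbrt (x - a n)) :
    -- (1) `f` is continuous and strictly increasing on `[0,1]`, hence a homeomorphism
    -- onto `[f 0, f 1]`
    ContinuousOn f (Set.Icc 0 1) ∧ StrictMonoOn f (Set.Icc 0 1) ∧
    (∃ φ : Set.Icc (0 : ℝ) 1 ≃ₜ Set.Icc (f 0) (f 1), ∀ x : Set.Icc (0 : ℝ) 1,
      (φ x : ℝ) = f (x : ℝ)) ∧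
    -- (2)-(5): the inverse `g`
    ∃ g : ℝ → ℝ,
      (∀ x ∈ Set.Icc (0 : ℝ) 1, g (f x) = x) ∧
      (∀ y ∈ Set.Icc (f 0) (f 1), g y ∈ Set.Icc (0 : ℝ) 1 ∧ f (g y) = y) ∧
      -- (2) `g` is Lipschitz
      (∃ K : NNReal, LipschitzOnWith K g (Set.Icc (f 0) (f 1))) ∧
      ∃ g' : ℝ → ℝ,
        -- (3) `g` is differentiable on the open interval
        (∀ y ∈ Set.Ioo (f 0) (f 1), HasDerivAt g (g' y) y) ∧
        -- (4) the derivative vanishes at every `f (a n)` with `a n ∈ (0,1)`,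
        -- and the zero set of `g'` is dense in `(f 0, f 1)`
        (∀ n : ℕ, a n ∈ Set.Ioo (0 : ℝ) 1 → g' (f (a n)) = 0) ∧
        Set.Ioo (f 0) (f 1) ⊆ closure {y ∈ Set.Ioo (f 0) (f 1) | g' y = 0} ∧
        -- (5) `g'` does not vanish identically
        ¬ ∀ y ∈ Set.Ioo (f 0) (f 1), g' y = 0 :=
  stmt19_general a ha f hf
end
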